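/- For λ ∈ ℂ* and b ∈ ℂ with b ≠ 1/2, the module Ω(λ, b) over the centerless N=2 superconformal algebra is simple: any nonzero subspace of ℂ[x] ⊕ ℂ[x]‾ closed under all operators L_m, H_m, G^±_m equals the whole space. -/

import Mathlib

open Polynomial

/-- The shift `f(x) ↦ f(x - m)`. -/
noncomputable def shp (m : ℤ) (f : ℂ[X]) : ℂ[X] := f.comp (X - C (m : ℂ))

/-- `L_m·f = -λᵐ(x + m(b-1))f(x-m)` on the first copy, `-λᵐ(x + m(b-1/2))f̄(x-m)` on the bar copy. -/
noncomputable def omL (lam b : ℂ) (m : ℤ) (v : ℂ[X] × ℂ[X]) : ℂ[X] × ℂ[X] :=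
  (-(lam ^ m) • ((X + C ((m : ℂ) * (b - 1))) * shp m v.1),
   -(lam ^ m) • ((X + C ((m : ℂ) * (b - 1/2))) * shp m v.2))

/-- `H_m·f = -2bλᵐf(x-m)`, `H_m·f̄ = (1-2b)λᵐf(x-m)‾`. -/
noncomputable def omH (lam b : ℂ) (m : ℤ) (v : ℂ[X] × ℂ[X]) : ℂ[X] × ℂ[X] :=
  ((-2 * b * lam ^ m) • shp m v.1, ((1 - 2 * b) * lam ^ m) • shp m v.2)

/-- `G⁺_m·f = -2λᵐ(x + (2b-1)m)f(x-m)‾`, `G⁺_m·f̄ = 0`. -/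
noncomputable def omGp (lam b : ℂ) (m : ℤ) (v : ℂ[X] × ℂ[X]) : ℂ[X] × ℂ[X] :=
  (0, (-2 * lam ^ m) • ((X + C ((2 * b - 1) * (m : ℂ))) * shp m v.1))

/-- `G⁻_m·f̄ = λᵐf(x-m)`, `G⁻_m·f = 0`. -/
noncomputable def omGm (lam : ℂ) (m : ℤ) (v : ℂ[X] × ℂ[X]) : ℂ[X] × ℂ[X] :=
  (lam ^ m • shp m v.2, 0)

/-!
Everything happens in the bar copy `ℂ[x]‾`. There `H₁` acts, up to the nonzero factor
`(1 - 2b)λ`, as the shift `f(x) ↦ f(x - 1)`, and `G⁺₀G⁻₀` as multiplication by `-2x`.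
Finite differences bring any nonzero element of a shift-stable subspace of `ℂ[x]` down to a
nonzero constant, and stability under multiplication by `x` then gives all of `ℂ[x]`.
Finally `G⁺₀` sends every nonzero vector either to a nonzero vector of the bar copy or to
zero, in which case the vector already lies in the bar copy, and `G⁻₀` copies the bar copy
onto the first one.
-/

namespace Polynomial

variable {R : Type*} [CommRing R]

theorem degree_taylor_sub_lt {p : R[X]} (hp : p ≠ 0) (r : R) :
    (taylor r p - p).degree < p.degree := by
  simpa only [degree_taylor] using degree_sub_lt_left (degree_taylor p r)
    ((taylor_eq_zero r p).not.mpr hp) (leadingCoeff_taylor r p)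

theorem eval_natCast_mul_of_taylor_eq {p : R[X]} {r : R} (h : taylor r p = p) (n : ℕ) :
    p.eval (n * r) = p.eval 0 := by
  induction n with
  | zero => simp
  | succ n ih => rw [Nat.cast_succ, add_one_mul, ← taylor_eval, h, ih]

theorem eq_C_of_taylor_eq [IsDomain R] [CharZero R] {p : R[X]} {r : R} (hr : r ≠ 0)
    (h : taylor r p = p) : p = C (p.eval 0) := by
  refine eq_of_infinite_eval_eq _ _ <|
    Set.infinite_of_injective_forall_mem (f := fun n : ℕ => (n : R) * r)
      ((mul_left_injective₀ hr).comp Nat.cast_injective) fun n => ?_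
  simp [eval_natCast_mul_of_taylor_eq h]

variable {K : Type*} [Field K] {S : Submodule K K[X]}

theorem one_mem_of_taylor_mem [CharZero K] {r : K} (hr : r ≠ 0)
    (htaylor : ∀ p ∈ S, taylor r p ∈ S) (hS : S ≠ ⊥) : (1 : K[X]) ∈ S := by
  obtain ⟨p, hpS, hp0⟩ := (Submodule.ne_bot_iff S).mp hS
  induction hd : p.natDegree using Nat.strong_induction_on generalizing p with
  | _ n ih =>
    by_cases hperiodic : taylor r p = p
    · rw [eq_C_of_taylor_eq hr hperiodic] at hpS hp0
      have hc : p.eval 0 ≠ 0 := by simpa using hp0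
      simpa [smul_C, inv_mul_cancel₀ hc] using S.smul_mem (p.eval 0)⁻¹ hpS
    · have hdiff : taylor r p - p ≠ 0 := sub_ne_zero.mpr hperiodic
      exact ih _ (hd ▸ natDegree_lt_natDegree hdiff (degree_taylor_sub_lt hp0 r)) _
        (S.sub_mem (htaylor p hpS) hpS) hdiff rfl

theorem eq_top_of_one_mem_of_X_mul_mem (hX : ∀ p ∈ S, X * p ∈ S) (h1 : (1 : K[X]) ∈ S) :
    S = ⊤ := by
  refine Submodule.eq_top_iff'.mpr fun p => ?_
  induction p using Polynomial.induction_on with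
  | C a => simpa [smul_eq_C_mul] using S.smul_mem a h1
  | add p q hp hq => exact S.add_mem hp hq
  | monomial n a ih => simpa only [pow_succ', mul_left_comm] using hX _ ih

theorem eq_top_of_X_mul_mem_of_taylor_mem [CharZero K] {r : K} (hr : r ≠ 0)
    (hX : ∀ p ∈ S, X * p ∈ S) (htaylor : ∀ p ∈ S, taylor r p ∈ S) (hS : S ≠ ⊥) : S = ⊤ :=
  eq_top_of_one_mem_of_X_mul_mem hX (one_mem_of_taylor_mem hr htaylor hS)

end Polynomial

theorem shp_eq_taylor (m : ℤ) (f : ℂ[X]) : shp m f = taylor (-(m : ℂ)) f := by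
  rw [shp, taylor_apply, C_neg, sub_eq_add_neg]

theorem omH_inr (lam b : ℂ) (m : ℤ) (f : ℂ[X]) :
    omH lam b m (0, f) = (0, ((1 - 2 * b) * lam ^ m) • shp m f) := by
  simp [omH, shp]

theorem omGp_zero (lam b : ℂ) (v : ℂ[X] × ℂ[X]) :
    omGp lam b 0 v = (0, (-2 : ℂ) • (X * v.1)) := by
  simp [omGp, shp]

theorem omGm_zero (lam : ℂ) (v : ℂ[X] × ℂ[X]) : omGm lam 0 v = (v.2, 0) := by
  simp [omGm, shp]

noncomputable def barPart (N : Submodule ℂ (ℂ[X] × ℂ[X])) : Submodule ℂ ℂ[X] :=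
  N.comap (LinearMap.inr ℂ ℂ[X] ℂ[X])

theorem mem_barPart {N : Submodule ℂ (ℂ[X] × ℂ[X])} {f : ℂ[X]} :
    f ∈ barPart N ↔ ((0 : ℂ[X]), f) ∈ N :=
  Iff.rfl

section barPart

variable {lam b : ℂ} {N : Submodule ℂ (ℂ[X] × ℂ[X])}

theorem shp_mem_barPart (hlam : lam ≠ 0) (hb : b ≠ 1/2) {m : ℤ}
    (hH : ∀ v ∈ N, omH lam b m v ∈ N) {f : ℂ[X]} (hf : f ∈ barPart N) :
    shp m f ∈ barPart N := by
  have hc : (1 - 2 * b) * lam ^ m ≠ 0 :=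
    mul_ne_zero (fun h => hb (by linear_combination -h / 2)) (zpow_ne_zero m hlam)
  have := N.smul_mem ((1 - 2 * b) * lam ^ m)⁻¹ (hH _ (mem_barPart.mp hf))
  rwa [omH_inr, Prod.smul_mk, smul_zero, smul_smul, inv_mul_cancel₀ hc, one_smul] at this

theorem X_mul_mem_barPart (hGp : ∀ v ∈ N, omGp lam b 0 v ∈ N)
    (hGm : ∀ v ∈ N, omGm lam 0 v ∈ N) {f : ℂ[X]} (hf : f ∈ barPart N) : X * f ∈ barPart N := by
  have := N.smul_mem (-2 : ℂ)⁻¹ (hGp _ (hGm _ (mem_barPart.mp hf)))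
  rwa [omGm_zero, omGp_zero, Prod.smul_mk, smul_zero, smul_smul,
    inv_mul_cancel₀ (by norm_num), one_smul] at this

theorem barPart_ne_bot (hGp : ∀ v ∈ N, omGp lam b 0 v ∈ N) (hN : N ≠ ⊥) : barPart N ≠ ⊥ := by
  obtain ⟨v, hvN, hv0⟩ := (Submodule.ne_bot_iff N).mp hN
  rw [Submodule.ne_bot_iff]
  by_cases hv1 : v.1 = 0
  · refine ⟨v.2, mem_barPart.mpr (by rwa [← hv1]), fun h2 => hv0 (Prod.ext hv1 h2)⟩
  · refine ⟨(-2 : ℂ) • (X * v.1), mem_barPart.mpr (omGp_zero lam b v ▸ hGp v hvN), ?_⟩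
    simp [hv1]

theorem eq_top_of_barPart_eq_top (hGm : ∀ v ∈ N, omGm lam 0 v ∈ N) (h : barPart N = ⊤) :
    N = ⊤ := by
  refine Submodule.eq_top_iff'.mpr fun ⟨f, g⟩ => ?_
  have hf : omGm lam 0 (0, f) ∈ N := hGm _ (mem_barPart.mp (h ▸ Submodule.mem_top))
  have hg : ((0 : ℂ[X]), g) ∈ N := mem_barPart.mp (h ▸ Submodule.mem_top)
  simpa [omGm_zero] using N.add_mem hf hg

end barPart

theorem stmt19_general (lam b : ℂ) (hlam : lam ≠ 0) (hb : b ≠ 1/2)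
    (N : Submodule ℂ (ℂ[X] × ℂ[X]))
    (hH : ∀ m : ℤ, ∀ v ∈ N, omH lam b m v ∈ N)
    (hGp : ∀ m : ℤ, ∀ v ∈ N, omGp lam b m v ∈ N)
    (hGm : ∀ m : ℤ, ∀ v ∈ N, omGm lam m v ∈ N)
    (hN : N ≠ ⊥) : N = ⊤ := by
  refine eq_top_of_barPart_eq_top (hGm 0) ?_
  refine eq_top_of_X_mul_mem_of_taylor_mem (r := -1) (by norm_num)
    (fun f hf => X_mul_mem_barPart (hGp 0) (hGm 0) hf) (fun f hf => ?_) (barPart_ne_bot (hGp 0) hN)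
  simpa [shp_eq_taylor] using shp_mem_barPart hlam hb (hH 1) hf

/-- For `λ ≠ 0` and `b ≠ 1/2`, the module `Ω(λ, b)` over the centerless N=2
superconformal algebra is simple: any nonzero subspace of `ℂ[x] ⊕ ℂ[x]‾` closed under
all the operators `L_m, H_m, G^±_m` is the whole space. -/
theorem stmt19 (lam b : ℂ) (hlam : lam ≠ 0) (hb : b ≠ 1/2)
    (N : Submodule ℂ (ℂ[X] × ℂ[X]))
    (hL : ∀ m : ℤ, ∀ v ∈ N, omL lam b m v ∈ N)
    (hH : ∀ m : ℤ, ∀ v ∈ N, omH lam b m v ∈ N)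
    (hGp : ∀ m : ℤ, ∀ v ∈ N, omGp lam b m v ∈ N)
    (hGm : ∀ m : ℤ, ∀ v ∈ N, omGm lam m v ∈ N)
    (hN : N ≠ ⊥) : N = ⊤ :=
  stmt19_general lam b hlam hb N hH hGp hGm hN
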